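/- Let A be an m×n integer matrix and B the 2m×2n matrix obtained by replacing each entry a of A by the block [[-a, a],[a, -a]]. Then for every k, the k-th determinantal ideal (gcd of k×k minors) of B equals that of A; in particular B and A have the same invariant factors up to trailing zeros, and rank(B) = rank(A). -/

import Mathlib

/-!
The block matrix is `A ⊗ₖ u wᵀ` with `u = (-1, 1)` and `w = (1, -1)`, so every submatrix of it
is `D₁ A' D₂` with `A'` a submatrix of `A` (rows and columns possibly repeated) and `D₁`, `D₂`
diagonal with entries `±1`. Hence its minors are `±` minors of `A`, and its rank is at most that
of `A`. Conversely, taking from every block its second row and first column gives back `A` itself.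
-/

open Matrix Kronecker

namespace Matrix

variable {R : Type*} [CommRing R] {l o m n ι κ : Type*}

def minorsIdeal (A : Matrix m n R) (k : ℕ) : Ideal R :=
  Ideal.span {d | ∃ (f : Fin k → m) (g : Fin k → n), d = (A.submatrix f g).det}

theorem submatrix_kronecker_vecMulVec [Fintype l] [Fintype o] [DecidableEq l] [DecidableEq o]
    (A : Matrix m n R) (u : ι → R) (w : κ → R) (f : l → m × ι) (g : o → n × κ) :
    (A ⊗ₖ vecMulVec u w).submatrix f g =
      diagonal (fun a => u (f a).2) * A.submatrix (fun a => (f a).1) (fun b => (g b).1) *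
        diagonal (fun b => w (g b).2) := by
  ext a b
  simp only [submatrix_apply, kroneckerMap_apply, vecMulVec_apply, diagonal_mul, mul_diagonal]
  ring

theorem det_submatrix_kronecker_vecMulVec {k : ℕ} (A : Matrix m n R) (u : ι → R) (w : κ → R)
    (f : Fin k → m × ι) (g : Fin k → n × κ) :
    ((A ⊗ₖ vecMulVec u w).submatrix f g).det =
      ((∏ a, u (f a).2) * ∏ b, w (g b).2) *
        (A.submatrix (fun a => (f a).1) (fun b => (g b).1)).det := by
  rw [submatrix_kronecker_vecMulVec, det_mul, det_mul, det_diagonal, det_diagonal]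
  ring

theorem minorsIdeal_kronecker_vecMulVec_le (A : Matrix m n R) (u : ι → R) (w : κ → R)
    (k : ℕ) : minorsIdeal (A ⊗ₖ vecMulVec u w) k ≤ minorsIdeal A k := by
  rw [minorsIdeal, Ideal.span_le]
  rintro d ⟨f, g, rfl⟩
  rw [det_submatrix_kronecker_vecMulVec]
  exact Ideal.mul_mem_left _ _ (Ideal.subset_span ⟨_, _, rfl⟩)

theorem minorsIdeal_le_kronecker_vecMulVec (A : Matrix m n R) {u : ι → R} {w : κ → R} {p : ι}
    {q : κ} (hu : IsUnit (u p)) (hw : IsUnit (w q)) (k : ℕ) :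
    minorsIdeal A k ≤ minorsIdeal (A ⊗ₖ vecMulVec u w) k := by
  rw [minorsIdeal, Ideal.span_le]
  rintro d ⟨f, g, rfl⟩
  have hdet := det_submatrix_kronecker_vecMulVec A u w (fun a => (f a, p)) (fun b => (g b, q))
  have hunit : IsUnit ((∏ _ : Fin k, u p) * ∏ _ : Fin k, w q) := by
    simpa only [Finset.prod_const] using (hu.pow _).mul (hw.pow _)
  refine (Ideal.unit_mul_mem_iff_mem _ hunit).mp ?_
  exact hdet ▸ Ideal.subset_span ⟨_, _, rfl⟩

theorem minorsIdeal_kronecker_vecMulVec (A : Matrix m n R) {u : ι → R} {w : κ → R} {p : ι}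
    {q : κ} (hu : IsUnit (u p)) (hw : IsUnit (w q)) (k : ℕ) :
    minorsIdeal (A ⊗ₖ vecMulVec u w) k = minorsIdeal A k :=
  (minorsIdeal_kronecker_vecMulVec_le A u w k).antisymm
    (minorsIdeal_le_kronecker_vecMulVec A hu hw k)

section Rank

variable [StrongRankCondition R] [Fintype m] [Fintype n] [Fintype κ] [DecidableEq m]
  [DecidableEq n]

theorem rank_kronecker_vecMulVec_le [Fintype ι] [DecidableEq ι] [DecidableEq κ]
    (A : Matrix m n R) (u : ι → R) (w : κ → R) :
    (A ⊗ₖ vecMulVec u w).rank ≤ A.rank := by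
  rw [← (A ⊗ₖ vecMulVec u w).submatrix_id_id, submatrix_kronecker_vecMulVec]
  exact (rank_mul_le_left _ _).trans <| (rank_mul_le_right _ _).trans (rank_submatrix_le _ _ _)

theorem le_rank_kronecker_vecMulVec (A : Matrix m n R) {u : ι → R}
    {w : κ → R} {p : ι} {q : κ} (hu : IsUnit (u p)) (hw : IsUnit (w q)) :
    A.rank ≤ (A ⊗ₖ vecMulVec u w).rank := by
  have h := submatrix_kronecker_vecMulVec A u w (fun i => (i, p)) (fun j => (j, q))
  have hdu : IsUnit (diagonal fun _ : m => u p).det := by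
    simpa only [det_diagonal, Finset.prod_const] using hu.pow _
  have hdw : IsUnit (diagonal fun _ : n => w q).det := by
    simpa only [det_diagonal, Finset.prod_const] using hw.pow _
  calc A.rank = ((diagonal fun _ : m => u p) * A * diagonal fun _ : n => w q).rank := by
        rw [rank_mul_eq_left_of_isUnit_det _ _ hdw, rank_mul_eq_right_of_isUnit_det _ _ hdu]
    _ = ((A ⊗ₖ vecMulVec u w).submatrix (fun i => (i, p)) fun j => (j, q)).rank :=
        congrArg rank h.symm
    _ ≤ _ := rank_submatrix_le _ _ _

theorem rank_kronecker_vecMulVec [Fintype ι] [DecidableEq ι] [DecidableEq κ] (A : Matrix m n R)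
    {u : ι → R} {w : κ → R} {p : ι} {q : κ} (hu : IsUnit (u p)) (hw : IsUnit (w q)) :
    (A ⊗ₖ vecMulVec u w).rank = A.rank :=
  (rank_kronecker_vecMulVec_le A u w).antisymm (le_rank_kronecker_vecMulVec A hu hw)

end Rank

end Matrix

/-- if `B = A ⊗ₖ [[-1,1],[1,-1]]` (each entry `a` of `A` replaced by the block
`[[-a,a],[a,-a]]`), then for every `k` the ideal of ℤ generated by the `k×k` minors of `B`
equals the one generated by the `k×k` minors of `A`; in particular `rank B = rank A`. -/
theorem stmt_1 (m n : ℕ) (A : Matrix (Fin m) (Fin n) ℤ) :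
    (∀ k : ℕ,
      Ideal.span {d : ℤ | ∃ (f : Fin k → Fin m × Fin 2) (g : Fin k → Fin n × Fin 2),
          d = ((A ⊗ₖ !![(-1 : ℤ), 1; 1, -1]).submatrix f g).det} =
      Ideal.span {d : ℤ | ∃ (f : Fin k → Fin m) (g : Fin k → Fin n),
          d = (A.submatrix f g).det}) ∧
    (A ⊗ₖ !![(-1 : ℤ), 1; 1, -1]).rank = A.rank := by
  have hB : !![(-1 : ℤ), 1; 1, -1] = vecMulVec ![-1, 1] ![1, -1] := by
    ext i j
    fin_cases i <;> fin_cases j <;> rfl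
  have hu : IsUnit (![(-1 : ℤ), 1] 1) := isUnit_one
  have hw : IsUnit (![(1 : ℤ), -1] 0) := isUnit_one
  rw [hB]
  exact ⟨minorsIdeal_kronecker_vecMulVec A hu hw, rank_kronecker_vecMulVec A hu hw⟩
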